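/- Let G be a complete k-edge-colored graph. Assume that for every color i ∈ {1,…,k} the monochromatic subgraph G_{|i} (together with some labeling ℓ_i, possibly different for each i) is a simple permutation graph, and that for every strong prime module M of G with |M| ≥ 3 exactly two distinct colors appear on the edges of the quotient graph G[M]/P_max(M). Then G is a complete edge-colored permutation graph. -/

import Mathlib

/-- The edge relation `E` on `V` together with the labeling `ℓ : V ≃ Fin n`
is the simple permutation graph of the permutation `π` of `{1,…,n}`:
`{u,v} ∈ E ⇔ ℓ(u) > ℓ(v) and π⁻¹(ℓ(u)) < π⁻¹(ℓ(v))` (stated symmetrically in `u,v`). -/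
def IsPermGraph {V : Type*} {n : ℕ} (E : V → V → Prop) (ℓ : V ≃ Fin n)
    (π : Equiv.Perm (Fin n)) : Prop :=
  ∀ u v : V, E u v ↔
    ((ℓ v < ℓ u ∧ π⁻¹ (ℓ u) < π⁻¹ (ℓ v)) ∨ (ℓ u < ℓ v ∧ π⁻¹ (ℓ v) < π⁻¹ (ℓ u)))

/-- `c` is the edge-coloring of a complete `k`-edge-colored graph on `V`:
it is symmetric, every pair of distinct vertices receives a color in `{1,…,k}`,
and every color in `{1,…,k}` occurs on some edge. -/
def IsCompleteColoring {V : Type*} (k : ℕ) (c : V → V → ℕ) : Prop :=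
  (∀ u v : V, c u v = c v u) ∧
  (∀ u v : V, u ≠ v → c u v ∈ Finset.Icc 1 k) ∧
  (∀ i ∈ Finset.Icc 1 k, ∃ u v : V, u ≠ v ∧ c u v = i)

/-- The edge relation of the `i`-th monochromatic subgraph `G_{|i}`. -/
def monoEdge {V : Type*} (c : V → V → ℕ) (i : ℕ) : V → V → Prop :=
  fun u v => u ≠ v ∧ c u v = i

/-- The complete edge-colored graph with coloring `c` is a complete edge-colored
permutation graph: there are a labeling `ℓ` and permutations `π i` such that every
monochromatic subgraph `(G_{|i}, ℓ)` is the simple permutation graph of `π i`. -/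
def IsCECPG {V : Type*} [Fintype V] (c : V → V → ℕ) : Prop :=
  ∃ (ℓ : V ≃ Fin (Fintype.card V)) (π : ℕ → Equiv.Perm (Fin (Fintype.card V))),
    ∀ i : ℕ, IsPermGraph (monoEdge c i) ℓ (π i)

/-- `c` contains a rainbow triangle: three vertices whose three connecting edges
have pairwise distinct colors. -/
def HasRainbowTriangle {V : Type*} (c : V → V → ℕ) : Prop :=
  ∃ u v w : V, u ≠ v ∧ u ≠ w ∧ v ≠ w ∧
    c u v ≠ c u w ∧ c u v ≠ c v w ∧ c u w ≠ c v w

/-- `M` is a module of the complete edge-colored graph with coloring `c`. -/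
def IsModule {V : Type*} (c : V → V → ℕ) (M : Set V) : Prop :=
  ∀ u ∈ M, ∀ w ∈ M, ∀ v ∉ M, c u v = c w v

/-- `M` is a strong module: a module that overlaps no other module. -/
def IsStrongModule {V : Type*} (c : V → V → ℕ) (M : Set V) : Prop :=
  IsModule c M ∧ ∀ M' : Set V, IsModule c M' → M ⊆ M' ∨ M' ⊆ M ∨ M ∩ M' = ∅

/-- `N` is a member of `P_max(M)`: a non-empty strong module that is a proper subset
of `M` and is inclusion-maximal among strong modules properly contained in `M`. -/
def PmaxPart {V : Type*} (c : V → V → ℕ) (M N : Set V) : Prop :=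
  N.Nonempty ∧ IsStrongModule c N ∧ N ⊂ M ∧
    ∀ N' : Set V, IsStrongModule c N' → N' ⊂ M → N ⊆ N' → N' = N

/-- The edge relation of the `i`-th monochromatic subgraph of the quotient graph
`G[M]/P_max(M)`: two distinct parts are adjacent with color `i` iff some (equivalently,
by the module property, every) edge between them has color `i`. -/
def quotientMonoEdge {V : Type*} (c : V → V → ℕ) (M : Set V) (i : ℕ) :
    {N : Set V // PmaxPart c M N} → {N : Set V // PmaxPart c M N} → Prop :=
  fun N₁ N₂ => N₁ ≠ N₂ ∧ ∃ u ∈ N₁.1, ∃ v ∈ N₂.1, c u v = i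

/-- The quotient graph `G[M]/P_max(M)` is a complete edge-colored permutation graph. -/
def QuotientIsCECPG {V : Type*} (c : V → V → ℕ) (M : Set V) : Prop :=
  ∃ (m : ℕ) (ℓ : {N : Set V // PmaxPart c M N} ≃ Fin m)
    (π : ℕ → Equiv.Perm (Fin m)),
    ∀ i : ℕ, IsPermGraph (quotientMonoEdge c M i) ℓ (π i)

/-- The strong module `M` (with `|M| ≥ 2`) is series: its quotient graph has at least
two vertices and all its edges carry the same color. -/
def IsSeriesModule {V : Type*} (c : V → V → ℕ) (M : Set V) : Prop :=
  (∃ N₁ N₂ : Set V, PmaxPart c M N₁ ∧ PmaxPart c M N₂ ∧ N₁ ≠ N₂) ∧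
  (∀ N₁ N₂ N₁' N₂' : Set V, PmaxPart c M N₁ → PmaxPart c M N₂ →
    PmaxPart c M N₁' → PmaxPart c M N₂' → N₁ ≠ N₂ → N₁' ≠ N₂' →
    ∀ u v u' v' : V, u ∈ N₁ → v ∈ N₂ → u' ∈ N₁' → v' ∈ N₂' → c u v = c u' v')

/-- The color `i` appears on some edge of the quotient graph `G[M]/P_max(M)`. -/
def QuotientColorAppears {V : Type*} (c : V → V → ℕ) (M : Set V) (i : ℕ) : Prop :=
  ∃ N₁ N₂ : Set V, PmaxPart c M N₁ ∧ PmaxPart c M N₂ ∧ N₁ ≠ N₂ ∧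
    ∃ u ∈ N₁, ∃ v ∈ N₂, c u v = i

/-! A coloring `c` is realized on a set `S` by maps `f` and `g i` when, inside `S`, the pairs of
color `i` are exactly the pairs ordered oppositely by `f` and by `g i`; on the whole vertex set,
`f` is the labeling `ℓ` and `g i` is `π i⁻¹ ∘ ℓ`. Realizers are built by induction over strong
modules: realizers of the parts in `P_max(M)` and one of the quotient compose lexicographically.
A quotient using a single color is realized by any order and its reverse. Otherwise `M` is prime
with at least three parts, so its quotient uses exactly two colors `i` and `j`, and the
permutation graph `(ℓ, π)` of color `i` realizes it: `π⁻¹ ∘ ℓ` for `i`, its reverse for `j`. -/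

open Set Function

section Realizes

variable {W W' α β α' β' : Type*}

def Discordant [LT α] [LT β] (f : W → α) (g : W → β) (u v : W) : Prop :=
  (f v < f u ∧ g u < g v) ∨ (f u < f v ∧ g v < g u)

lemma discordant_iff_of_lt_iff [LT α] [LT β] [LT α'] [LT β'] {f : W → α} {g : W → β}
    {f' : W' → α'} {g' : W' → β'} {u v : W} {u' v' : W'}
    (hf : f u < f v ↔ f' u' < f' v') (hf' : f v < f u ↔ f' v' < f' u')
    (hg : g u < g v ↔ g' u' < g' v') (hg' : g v < g u ↔ g' v' < g' u') :
    Discordant f g u v ↔ Discordant f' g' u' v' := by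
  unfold Discordant
  rw [hf, hf', hg, hg']

lemma Discordant.ne [Preorder α] [LT β] {f : W → α} {g : W → β} {u v : W}
    (h : Discordant f g u v) : u ≠ v := by
  rintro rfl
  rcases h with ⟨h, -⟩ | ⟨h, -⟩ <;> exact lt_irrefl _ h

lemma not_discordant_self [Preorder α] (f : W → α) (u v : W) : ¬ Discordant f f u v := by
  rintro (⟨h, h'⟩ | ⟨h, h'⟩) <;> exact lt_asymm h h'

lemma discordant_neg_iff [LinearOrder α] [AddCommGroup β] [LinearOrder β] [IsOrderedAddMonoid β]
    {f : W → α} {g : W → β} {u v : W} (hf : f u ≠ f v) (hg : g u ≠ g v) :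
    Discordant f (-g) u v ↔ ¬ Discordant f g u v := by
  unfold Discordant
  simp only [Pi.neg_apply, neg_lt_neg_iff]
  rcases hf.lt_or_gt with h | h <;> rcases hg.lt_or_gt with h' | h' <;>
    simp [h, h', h.not_gt, h'.not_gt]

structure Realizes [LT α] [LT β] (c : W → W → ℕ) (S : Set W) (f : W → α) (g : ℕ → W → β) :
    Prop where
  injOn_fst : InjOn f S
  injOn_snd : ∀ i, InjOn (g i) S
  monoEdge_iff : ∀ i, ∀ u ∈ S, ∀ v ∈ S, monoEdge c i u v ↔ Discordant f (g i) u v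

variable {c : W → W → ℕ} {S T : Set W}

lemma Realizes.mono [LT α] [LT β] {f : W → α} {g : ℕ → W → β} (h : Realizes c T f g)
    (hST : S ⊆ T) : Realizes c S f g where
  injOn_fst := h.injOn_fst.mono hST
  injOn_snd i := (h.injOn_snd i).mono hST
  monoEdge_iff i u hu v hv := h.monoEdge_iff i u (hST hu) v (hST hv)

lemma realizes_of_subsingleton [Preorder α] [Preorder β] (hS : S.Subsingleton) (f : W → α)
    (g : ℕ → W → β) : Realizes c S f g where
  injOn_fst := hS.injOn f
  injOn_snd i := hS.injOn (g i)
  monoEdge_iff i u hu v hv := by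
    obtain rfl := hS hu hv
    exact iff_of_false (fun h => h.1 rfl) fun h => h.ne rfl

lemma Set.InjOn.of_lt_iff [LinearOrder α] [LinearOrder α'] {f : W → α} {f' : W → α'}
    (hf : InjOn f S) (h : ∀ u ∈ S, ∀ v ∈ S, f' u < f' v ↔ f u < f v) : InjOn f' S := by
  intro u hu v hv huv
  refine hf hu hv (le_antisymm ?_ ?_)
  · exact not_lt.1 fun hlt => ((h v hv u hu).2 hlt).ne huv.symm
  · exact not_lt.1 fun hlt => ((h u hu v hv).2 hlt).ne huv

lemma Realizes.of_lt_iff [LinearOrder α] [LinearOrder β] [LinearOrder α'] [LinearOrder β']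
    {f : W → α} {g : ℕ → W → β} {f' : W → α'} {g' : ℕ → W → β'} (h : Realizes c S f g)
    (hf : ∀ u ∈ S, ∀ v ∈ S, f' u < f' v ↔ f u < f v)
    (hg : ∀ i, ∀ u ∈ S, ∀ v ∈ S, g' i u < g' i v ↔ g i u < g i v) : Realizes c S f' g' where
  injOn_fst := h.injOn_fst.of_lt_iff hf
  injOn_snd i := (h.injOn_snd i).of_lt_iff (hg i)
  monoEdge_iff i u hu v hv := (h.monoEdge_iff i u hu v hv).trans <|
    discordant_iff_of_lt_iff (hf u hu v hv).symm (hf v hv u hu).symm (hg i u hu v hv).symm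
      (hg i v hv u hu).symm

/-- Inside `S` the class of color `j` is the complement of the class of color `i`, and reversing
`h` complements discordance. -/
theorem realizes_of_two_colors [AddCommGroup β] [LinearOrder β] [IsOrderedAddMonoid β] {i j : ℕ}
    (hij : i ≠ j) (hcol : ∀ u ∈ S, ∀ v ∈ S, u ≠ v → c u v = i ∨ c u v = j) {f h : W → β}
    (hf : InjOn f S) (hh : InjOn h S)
    (hi : ∀ u ∈ S, ∀ v ∈ S, monoEdge c i u v ↔ Discordant f h u v) :
    Realizes c S f (fun i' => if i' = i then h else if i' = j then -h else f) where
  injOn_fst := hf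
  injOn_snd i' := by
    split_ifs
    · exact hh
    · exact fun u hu v hv huv => hh hu hv (neg_injective huv)
    · exact hf
  monoEdge_iff i' u hu v hv := by
    split_ifs with hi' hj'
    · exact hi' ▸ hi u hu v hv
    · subst hj'
      by_cases huv : u = v
      · subst huv
        exact iff_of_false (fun h => h.1 rfl) fun h => h.ne rfl
      rw [discordant_neg_iff (hf.ne hu hv huv) (hh.ne hu hv huv), ← hi u hu v hv]
      have := hcol u hu v hv huv
      simp only [monoEdge, huv, ne_eq, not_false_eq_true, true_and]
      omega
    · refine iff_of_false (fun ⟨huv, hc⟩ => ?_) (not_discordant_self f u v)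
      rcases hcol u hu v hv huv with h | h <;> omega

noncomputable def rankOn [LT α] (s : Set W) (f : W → α) (v : W) : ℕ :=
  (s ∩ {w | f w < f v}).ncard

lemma rankOn_le_rankOn [Preorder α] {f : W → α} {u v : W} (hS : S.Finite) (h : f u ≤ f v) :
    rankOn S f u ≤ rankOn S f v :=
  ncard_le_ncard (inter_subset_inter_right _ fun _ hw => lt_of_lt_of_le hw h) (hS.inter_of_left _)

lemma rankOn_lt_rankOn [Preorder α] {f : W → α} {u v : W} (hS : S.Finite) (hu : u ∈ S)
    (h : f u < f v) : rankOn S f u < rankOn S f v :=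
  ncard_lt_ncard ⟨inter_subset_inter_right _ fun _ hw => hw.trans h,
    fun hsub => lt_irrefl _ (hsub ⟨hu, h⟩).2⟩ (hS.inter_of_left _)

lemma rankOn_lt_rankOn_iff [LinearOrder α] {f : W → α} {u v : W} (hS : S.Finite) (hu : u ∈ S) :
    rankOn S f u < rankOn S f v ↔ f u < f v :=
  ⟨fun h => lt_of_not_ge fun h' => (rankOn_le_rankOn hS h').not_gt h, rankOn_lt_rankOn hS hu⟩

lemma Realizes.rankOn [LinearOrder α] [LinearOrder β] {f : W → α} {g : ℕ → W → β}
    (h : Realizes c S f g) (hS : S.Finite) :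
    Realizes c S (rankOn S f) (fun i => rankOn S (g i)) :=
  h.of_lt_iff (fun _ hu _ _ => rankOn_lt_rankOn_iff hS hu)
    (fun _ _ hu _ _ => rankOn_lt_rankOn_iff hS hu)

lemma exists_equiv_fin_lt_iff [Fintype W] [LinearOrder α] {f : W → α} (hf : Injective f) :
    ∃ e : W ≃ Fin (Fintype.card W), ∀ u v, e u < e v ↔ f u < f v := by
  let _ : LinearOrder W := LinearOrder.lift' f hf
  exact ⟨(Fintype.orderIsoFinOfCardEq W rfl).symm.toEquiv,
    fun _ _ => (Fintype.orderIsoFinOfCardEq W rfl).symm.lt_iff_lt⟩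

theorem isCECPG_of_realizes [Fintype W] [LinearOrder α] [LinearOrder β] {f : W → α}
    {g : ℕ → W → β} (h : Realizes c univ f g) : IsCECPG c := by
  obtain ⟨ℓ, hℓ⟩ := exists_equiv_fin_lt_iff (injOn_univ.1 h.injOn_fst)
  choose σ hσ using fun i => exists_equiv_fin_lt_iff (injOn_univ.1 (h.injOn_snd i))
  refine ⟨ℓ, fun i => (σ i).symm.trans ℓ, fun i u v => ?_⟩
  have hπ : ∀ w, ((σ i).symm.trans ℓ)⁻¹ (ℓ w) = σ i w := fun w => by
    simp [Equiv.Perm.inv_def]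
  rw [h.monoEdge_iff i u trivial v trivial, hπ, hπ]
  exact discordant_iff_of_lt_iff (hℓ u v).symm (hℓ v u).symm (hσ i u v).symm (hσ i v u).symm

end Realizes

section Lex

variable {V ι α β : Type*} {c : V → V → ℕ} {M : Set V} {cq : ι → ι → ℕ} {S : Set ι} {p : V → ι}

lemma toLex_lt_toLex_of_ne [Preorder α] [LT β] {a b : α} (h : a ≠ b) (x y : β) :
    toLex (a, x) < toLex (b, y) ↔ a < b := by
  simp [Prod.Lex.toLex_lt_toLex, h]

lemma toLex_lt_toLex_iff_right [Preorder α] [LT β] (a : α) {x y : β} :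
    toLex (a, x) < toLex (a, y) ↔ x < y := by
  simp [Prod.Lex.toLex_lt_toLex]

lemma injOn_toLex_comp [Preorder α] [Preorder β] {F : ι → α} {f : ι → V → β} (hF : InjOn F S)
    (hp : MapsTo p M S) (hf : ∀ a ∈ S, InjOn (f a) {v ∈ M | p v = a}) :
    InjOn (fun v => toLex (F (p v), f (p v) v)) M := by
  intro u hu v hv huv
  obtain ⟨hF', hf'⟩ := Prod.ext_iff.1 (toLex.injective huv)
  have hpuv : p u = p v := hF (hp hu) (hp hv) hF'
  refine hf _ (hp hu) ⟨hu, rfl⟩ ⟨hv, hpuv.symm⟩ ?_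
  simpa only [hpuv] using hf'

theorem Realizes.lex [LinearOrder α] [LinearOrder β] {F : ι → α} {G : ℕ → ι → α}
    {f : ι → V → β} {g : ι → ℕ → V → β} (hFG : Realizes cq S F G) (hp : MapsTo p M S)
    (hc : ∀ u ∈ M, ∀ v ∈ M, p u ≠ p v → c u v = cq (p u) (p v))
    (hfg : ∀ a ∈ S, Realizes c {v ∈ M | p v = a} (f a) (g a)) :
    Realizes c M (fun v => toLex (F (p v), f (p v) v))
      (fun i v => toLex (G i (p v), g (p v) i v)) where
  injOn_fst := injOn_toLex_comp hFG.injOn_fst hp fun a ha => (hfg a ha).injOn_fst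
  injOn_snd i := injOn_toLex_comp (hFG.injOn_snd i) hp fun a ha => (hfg a ha).injOn_snd i
  monoEdge_iff i u hu v hv := by
    by_cases hpuv : p u = p v
    · rw [(hfg _ (hp hu)).monoEdge_iff i u ⟨hu, rfl⟩ v ⟨hv, hpuv.symm⟩]
      refine discordant_iff_of_lt_iff ?_ ?_ ?_ ?_ <;> simp only [hpuv, toLex_lt_toLex_iff_right]
    · have hedge : monoEdge c i u v ↔ monoEdge cq i (p u) (p v) := by
        simp only [monoEdge, hc u hu v hv hpuv, ne_eq, hpuv, not_false_eq_true, true_and,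
          and_iff_right_iff_imp]
        rintro - rfl
        exact hpuv rfl
      have hF := hFG.injOn_fst.ne (hp hu) (hp hv) hpuv
      have hG := (hFG.injOn_snd i).ne (hp hu) (hp hv) hpuv
      rw [hedge, hFG.monoEdge_iff i _ (hp hu) _ (hp hv)]
      exact discordant_iff_of_lt_iff (toLex_lt_toLex_of_ne hF _ _).symm
        (toLex_lt_toLex_of_ne hF.symm _ _).symm (toLex_lt_toLex_of_ne hG _ _).symm
        (toLex_lt_toLex_of_ne hG.symm _ _).symm

end Lex

section Modules

variable {V : Type*} {c : V → V → ℕ} {M N N' : Set V} {u v : V}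

lemma isStrongModule_univ (c : V → V → ℕ) : IsStrongModule c univ :=
  ⟨fun _ _ _ _ _ hv => absurd (mem_univ _) hv, fun M' _ => Or.inr (Or.inl (subset_univ M'))⟩

lemma isStrongModule_singleton (c : V → V → ℕ) (v : V) : IsStrongModule c {v} := by
  refine ⟨fun _ hu _ hw _ _ => by rw [mem_singleton_iff.1 hu, mem_singleton_iff.1 hw],
    fun M' _ => ?_⟩
  by_cases h : v ∈ M'
  · exact Or.inl (singleton_subset_iff.2 h)
  · exact Or.inr (Or.inr (singleton_inter_eq_empty.2 h))

lemma PmaxPart.eq_of_mem (hN : PmaxPart c M N) (hN' : PmaxPart c M N') (hv : v ∈ N)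
    (hv' : v ∈ N') : N = N' := by
  rcases hN.2.1.2 N' hN'.2.1.1 with h | h | h
  · exact (hN.2.2.2 N' hN'.2.1 hN'.2.2.1 h).symm
  · exact hN'.2.2.2 N hN.2.1 hN.2.2.1 h
  · exact absurd (h ▸ mem_inter hv hv' : v ∈ (∅ : Set V)) (notMem_empty v)

lemma exists_pmaxPart_mem [Finite V] (hM : M.Nontrivial) (hv : v ∈ M) :
    ∃ N, PmaxPart c M N ∧ v ∈ N := by
  have hsingle : IsStrongModule c {v} ∧ {v} ⊂ M :=
    ⟨isStrongModule_singleton c v, (singleton_subset_iff.2 hv).ssubset_of_ne hM.ne_singleton.symm⟩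
  obtain ⟨N, hvN, hN⟩ :=
    Finite.exists_le_maximal (p := fun N => IsStrongModule c N ∧ N ⊂ M) hsingle
  exact ⟨N, ⟨⟨v, hvN rfl⟩, hN.1.1, hN.1.2,
    fun N' hN' hN'M hNN' => (hN.eq_of_le ⟨hN', hN'M⟩ hNN').symm⟩, hvN rfl⟩

lemma PmaxPart.color_eq (hsymm : ∀ u v, c u v = c v u) {N₁ N₂ : Set V}
    (hN₁ : PmaxPart c M N₁) (hN₂ : PmaxPart c M N₂) (hne : N₁ ≠ N₂) {u u' v v' : V}
    (hu : u ∈ N₁) (hu' : u' ∈ N₁) (hv : v ∈ N₂) (hv' : v' ∈ N₂) : c u v = c u' v' := by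
  have hv₁ : v ∉ N₁ := fun h => hne (hN₁.eq_of_mem hN₂ h hv)
  have hu'₂ : u' ∉ N₂ := fun h => hne (hN₁.eq_of_mem hN₂ hu' h)
  rw [hN₁.2.1.1 u hu u' hu' v hv₁, hsymm u' v, hN₂.2.1.1 v hv v' hv' u' hu'₂, hsymm]

theorem exists_realizes_of_isStrongModule [Finite V] {α : Type*} [LinearOrder α]
    (hsymm : ∀ u v, c u v = c v u)
    (hquot : ∀ M, IsStrongModule c M → ∀ r : Set V → V, (∀ N, PmaxPart c M N → r N ∈ N) →
      ∃ (F : Set V → α) (G : ℕ → Set V → α),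
        Realizes (fun N₁ N₂ => c (r N₁) (r N₂)) {N | PmaxPart c M N} F G)
    (M : Set V) (hM : IsStrongModule c M) :
    ∃ (f : V → ℕ) (g : ℕ → V → ℕ), Realizes c M f g := by
  induction M using WellFoundedLT.induction with
  | _ M ih =>
  rcases M.subsingleton_or_nontrivial with hsub | hnt
  · exact ⟨0, 0, realizes_of_subsingleton hsub _ _⟩
  have : Nonempty V := ⟨hnt.nonempty.some⟩
  choose! pt hpt using fun v (hv : v ∈ M) => exists_pmaxPart_mem (c := c) hnt hv
  choose! r hr using fun N (hN : PmaxPart c M N) => hN.1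
  choose! f g hfg using fun N (hN : PmaxPart c M N) => ih N hN.2.2.1 hN.2.1
  obtain ⟨F, G, hFG⟩ := hquot M hM r hr
  have hlex := hFG.lex (p := pt) (fun v hv => (hpt v hv).1)
    (fun u hu v hv huv => (hpt u hu).1.color_eq hsymm (hpt v hv).1 huv (hpt u hu).2
      (hr _ (hpt u hu).1) (hpt v hv).2 (hr _ (hpt v hv).1))
    fun N hN => (hfg N hN).mono fun v ⟨hv, hvN⟩ => hvN ▸ (hpt v hv).2
  exact ⟨_, _, hlex.rankOn M.toFinite⟩

end Modules

lemma three_le_ncard_of_color_ne {W : Type*} {c : W → W → ℕ} (hsymm : ∀ u v, c u v = c v u)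
    {S : Set W} (hS : S.Finite) {a b a' b' : W} (ha : a ∈ S) (hb : b ∈ S) (ha' : a' ∈ S)
    (hb' : b' ∈ S) (hab : a ≠ b) (ha'b' : a' ≠ b') (hne : c a b ≠ c a' b') : 3 ≤ S.ncard := by
  by_contra! h
  have hS2 : S = {a, b} :=
    (eq_of_subset_of_ncard_le (pair_subset ha hb) (by rw [ncard_pair hab]; omega) hS).symm
  rw [hS2] at ha' hb'
  rcases ha' with rfl | rfl <;> rcases hb' with rfl | rfl <;> simp_all

theorem exists_realizes_quotient {V : Type*} [Fintype V] {k : ℕ} {c : V → V → ℕ} {M : Set V}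
    (hc : IsCompleteColoring k c)
    (hmono : ∀ i ∈ Finset.Icc 1 k,
      ∃ (ℓᵢ : V ≃ Fin (Fintype.card V)) (πᵢ : Equiv.Perm (Fin (Fintype.card V))),
        IsPermGraph (monoEdge c i) ℓᵢ πᵢ)
    (hprime : ∀ M : Set V, IsStrongModule c M → 3 ≤ M.ncard → ¬ IsSeriesModule c M →
      ∃ i j : ℕ, i ≠ j ∧ QuotientColorAppears c M i ∧ QuotientColorAppears c M j ∧
        ∀ i' : ℕ, QuotientColorAppears c M i' → i' = i ∨ i' = j)
    (hM : IsStrongModule c M) {r : Set V → V} (hr : ∀ N, PmaxPart c M N → r N ∈ N) :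
    ∃ (F : Set V → ℤ) (G : ℕ → Set V → ℤ),
      Realizes (fun N₁ N₂ => c (r N₁) (r N₂)) {N | PmaxPart c M N} F G := by
  set P := {N | PmaxPart c M N}
  have hr_inj : InjOn r P := fun a ha b hb hab => ha.eq_of_mem hb (hr a ha) (hab ▸ hr b hb)
  by_cases hconst : ∃ i₀, ∀ a ∈ P, ∀ b ∈ P, a ≠ b → c (r a) (r b) = i₀
  · obtain ⟨i₀, hi₀⟩ := hconst
    obtain ⟨e, he⟩ := Countable.exists_injective_nat (Set V)
    set E : Set V → ℤ := fun N => e N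
    -- the second color `i₀ + 1` is a dummy that occurs nowhere
    have hE : Injective E := Nat.cast_injective.comp he
    refine ⟨E, _, realizes_of_two_colors (Nat.succ_ne_self i₀).symm
      (fun a ha b hb hab => Or.inl (hi₀ a ha b hb hab)) hE.injOn (neg_injective.comp hE).injOn
      fun a ha b hb => ⟨fun ⟨hab, _⟩ => ?_, fun hd => ⟨hd.ne, hi₀ a ha b hb hd.ne⟩⟩⟩
    exact (discordant_neg_iff (hE.ne hab) (hE.ne hab)).2 (not_discordant_self _ a b)
  push Not at hconst
  obtain ⟨a, ha, b, hb, hab, -⟩ := hconst 0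
  obtain ⟨a', ha', b', hb', ha'b', hne⟩ := hconst (c (r a) (r b))
  have hnotser : ¬ IsSeriesModule c M := fun hs =>
    hne (hs.2 a' b' a b ha' hb' ha hb ha'b' hab _ _ _ _ (hr a' ha') (hr b' hb') (hr a ha) (hr b hb))
  have h3 : 3 ≤ M.ncard :=
    (three_le_ncard_of_color_ne (c := fun N₁ N₂ => c (r N₁) (r N₂)) (fun _ _ => hc.1 _ _)
      P.toFinite ha hb ha' hb' hab ha'b' hne.symm).trans
      (ncard_le_ncard_of_injOn r (fun N hN => hN.2.2.1.1 (hr N hN)) hr_inj M.toFinite)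
  obtain ⟨i, j, hij, ⟨N₁, N₂, hN₁, hN₂, hN, u, hu, v, hv, huv⟩, -, hall⟩ :=
    hprime M hM h3 hnotser
  have hcol : ∀ a ∈ P, ∀ b ∈ P, a ≠ b → c (r a) (r b) = i ∨ c (r a) (r b) = j :=
    fun a ha b hb hab => hall _ ⟨a, b, ha, hb, hab, r a, hr a ha, r b, hr b hb, rfl⟩
  have hik : i ∈ Finset.Icc 1 k :=
    huv ▸ hc.2.1 u v fun h => hN (hN₁.eq_of_mem hN₂ hu (h ▸ hv))
  obtain ⟨ℓ, π, hℓπ⟩ := hmono i hik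
  have hcast : StrictMono fun x : Fin (Fintype.card V) => ((x : ℕ) : ℤ) :=
    Nat.strictMono_cast.comp fun _ _ h => h
  refine ⟨_, _, realizes_of_two_colors hij hcol (f := fun N => ((ℓ (r N) : ℕ) : ℤ))
    (h := fun N => ((π⁻¹ (ℓ (r N)) : ℕ) : ℤ))
    ((hcast.injective.comp ℓ.injective).comp_injOn hr_inj)
    ((hcast.injective.comp (π⁻¹.injective.comp ℓ.injective)).comp_injOn hr_inj)
    fun a ha b hb => ?_⟩
  have hrab : a ≠ b ↔ r a ≠ r b := (hr_inj.ne_iff ha hb).symm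
  simp only [monoEdge, hrab]
  exact (hℓπ (r a) (r b)).trans (discordant_iff_of_lt_iff (f := ℓ) (g := fun w => π⁻¹ (ℓ w))
    hcast.lt_iff_lt.symm hcast.lt_iff_lt.symm hcast.lt_iff_lt.symm hcast.lt_iff_lt.symm)

theorem stmt16_general {V : Type*} [Fintype V] (k : ℕ) (c : V → V → ℕ)
    (hc : IsCompleteColoring k c)
    (hmono : ∀ i ∈ Finset.Icc 1 k,
      ∃ (ℓᵢ : V ≃ Fin (Fintype.card V)) (πᵢ : Equiv.Perm (Fin (Fintype.card V))),
        IsPermGraph (monoEdge c i) ℓᵢ πᵢ)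
    (hprime : ∀ M : Set V, IsStrongModule c M → 3 ≤ M.ncard → ¬ IsSeriesModule c M →
      ∃ i j : ℕ, i ≠ j ∧ QuotientColorAppears c M i ∧ QuotientColorAppears c M j ∧
        ∀ i' : ℕ, QuotientColorAppears c M i' → i' = i ∨ i' = j) :
    IsCECPG c := by
  obtain ⟨f, g, hfg⟩ := exists_realizes_of_isStrongModule hc.1
    (fun _ hM _ hr => exists_realizes_quotient hc hmono hprime hM hr) univ (isStrongModule_univ c)
  exact isCECPG_of_realizes hfg

/-- If every monochromatic subgraph `G_{|i}` of `G` is a simple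
permutation graph (with some labeling, possibly different for each `i`), and for every
strong prime module `M` of `G` with `|M| ≥ 3` exactly two distinct colors appear on
the edges of the quotient graph `G[M]/P_max(M)`, then `G` is a complete edge-colored
permutation graph. -/
theorem stmt16 {V : Type*} [Fintype V] [Nonempty V] (k : ℕ) (c : V → V → ℕ)
    (hc : IsCompleteColoring k c)
    (hmono : ∀ i ∈ Finset.Icc 1 k,
      ∃ (ℓᵢ : V ≃ Fin (Fintype.card V)) (πᵢ : Equiv.Perm (Fin (Fintype.card V))),
        IsPermGraph (monoEdge c i) ℓᵢ πᵢ)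
    (hprime : ∀ M : Set V, IsStrongModule c M → 3 ≤ M.ncard → ¬ IsSeriesModule c M →
      ∃ i j : ℕ, i ≠ j ∧ QuotientColorAppears c M i ∧ QuotientColorAppears c M j ∧
        ∀ i' : ℕ, QuotientColorAppears c M i' → i' = i ∨ i' = j) :
    IsCECPG c :=
  stmt16_general k c hc hmono hprime
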